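/- arXiv:0912.0676 — 5 statements merged into one kernel-verified Lean document; each statement's English description precedes it below -/
import Mathlib

section
/- Let (u, v, w) be the standard basis of ℚ³, let ε : ℚ³ → ℚ³ be the linear automorphism with ε(u) = v, ε(v) = −u − v, ε(w) = w, and let σ = Cone(5u+v−5w, −5u−5v+14w, 4u−v). Then σ ∩ ε(σ) = {0}; equivalently, Cone(5u+v−5w, −5u−5v+14w, 4u−v) ∩ Cone(−u+4v−5w, 5u+14w, u+5v) = {0}. -/
open Pointwise

/-- The cone generated by a finite family of vectors: all nonnegative
rational linear combinations of the `g i`. -/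
def coneGen {V : Type*} [AddCommGroup V] [Module ℚ V] {n : ℕ} (g : Fin n → V) : Set V :=
  {x | ∃ c : Fin n → ℚ, (∀ i, 0 ≤ c i) ∧ x = ∑ i, c i • g i}

/-- A set is a cone if it is the cone generated by some finite family of vectors. -/
def IsCone {V : Type*} [AddCommGroup V] [Module ℚ V] (C : Set V) : Prop :=
  ∃ (n : ℕ) (g : Fin n → V), C = coneGen g

/-- `F` is a face of the cone `C` if `F = C ∩ l⁻¹(0)` for some linear form `l`
nonnegative on `C`. -/
def IsFaceOf {V : Type*} [AddCommGroup V] [Module ℚ V] (F C : Set V) : Prop :=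
  ∃ l : V →ₗ[ℚ] ℚ, (∀ x ∈ C, 0 ≤ l x) ∧ F = C ∩ {x | l x = 0}

/-- A fan: a finite collection of strictly convex cones, closed under taking faces,
such that the intersection of any two of its cones is a face of each. -/
def IsFan {V : Type*} [AddCommGroup V] [Module ℚ V] (S : Set (Set V)) : Prop :=
  S.Finite ∧
  (∀ C ∈ S, IsCone C ∧ C ∩ (-C) = ({0} : Set V)) ∧
  (∀ C ∈ S, ∀ F : Set V, IsFaceOf F C → F ∈ S) ∧
  (∀ C ∈ S, ∀ C' ∈ S, IsFaceOf (C ∩ C') C ∧ IsFaceOf (C ∩ C') C')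

/-- A cone of the collection `S` is maximal if it is not strictly contained in
another cone of `S`. -/
def IsMaximalIn {V : Type*} [AddCommGroup V] [Module ℚ V] (S : Set (Set V)) (C : Set V) : Prop :=
  C ∈ S ∧ ∀ C' ∈ S, C ⊆ C' → C' = C

/-- A fan is quasi-projective if there is a family of linear forms indexed by its
maximal cones which agree on pairwise intersections and satisfy the strict
inequality condition. -/
def IsQuasiProjectiveFan {V : Type*} [AddCommGroup V] [Module ℚ V] (S : Set (Set V)) : Prop :=
  ∃ l : Set V → (V →ₗ[ℚ] ℚ),
    (∀ C, IsMaximalIn S C → ∀ C', IsMaximalIn S C' → ∀ x ∈ C ∩ C', l C x = l C' x) ∧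
    (∀ C, IsMaximalIn S C → ∀ C', IsMaximalIn S C' → C ≠ C' →
      ∀ x ∈ C, x ∉ C' → l C' x < l C x)

/-- The generators `5u+v−5w`, `−5u−5v+14w`, `4u−v` of the cone `σ`. -/
def genS : Fin 3 → (Fin 3 → ℚ) := ![![5, 1, -5], ![-5, -5, 14], ![4, -1, 0]]

/-- The cone `σ = Cone(5u+v−5w, −5u−5v+14w, 4u−v)` in `ℚ³`. -/
def coneSigma : Set (Fin 3 → ℚ) := coneGen genS

/-- The matrix of `ε` in the standard basis `(u, v, w)`:
`ε(u) = v`, `ε(v) = −u−v`, `ε(w) = w`. -/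
def epsMat : Matrix (Fin 3) (Fin 3) ℚ := ![![0, -1, 0], ![1, -1, 0], ![0, 0, 1]]

/-- The linear automorphism `ε : ℚ³ → ℚ³`. -/
def eps : (Fin 3 → ℚ) →ₗ[ℚ] (Fin 3 → ℚ) := Matrix.toLin' epsMat

/-! A linear form that is positive on the generators of `σ` and nonpositive on those of `ε(σ)`
separates the two cones: it vanishes on their intersection, and a point of `σ` on which it
vanishes is `0`. Such a form is `(x, y, z) ↦ -4y - z`, which takes the values `1, 6, 4` on the
generators of `σ` and `-11, -14, -20` on those of `ε(σ)`. -/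

section coneGen

variable {V W : Type*} [AddCommGroup V] [Module ℚ V] [AddCommGroup W] [Module ℚ W] {n : ℕ}

theorem zero_mem_coneGen (g : Fin n → V) : (0 : V) ∈ coneGen g :=
  ⟨0, fun _ => le_rfl, by simp⟩

theorem LinearMap.image_coneGen (f : V →ₗ[ℚ] W) (g : Fin n → V) :
    f '' coneGen g = coneGen (f ∘ g) := by
  ext x
  constructor
  · rintro ⟨_, ⟨c, hc, rfl⟩, rfl⟩
    exact ⟨c, hc, by simp⟩
  · rintro ⟨c, hc, rfl⟩
    exact ⟨∑ i, c i • g i, ⟨c, hc, rfl⟩, by simp⟩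

theorem map_nonneg_of_mem_coneGen {g : Fin n → V} {l : V →ₗ[ℚ] ℚ} (hl : ∀ i, 0 ≤ l (g i))
    {x : V} (hx : x ∈ coneGen g) : 0 ≤ l x := by
  obtain ⟨c, hc, rfl⟩ := hx
  simpa using Finset.sum_nonneg fun i _ => mul_nonneg (hc i) (hl i)

theorem eq_zero_of_mem_coneGen_of_map_eq_zero {g : Fin n → V} {l : V →ₗ[ℚ] ℚ}
    (hl : ∀ i, 0 < l (g i)) {x : V} (hx : x ∈ coneGen g) (hlx : l x = 0) : x = 0 := by
  obtain ⟨c, hc, rfl⟩ := hx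
  have hsum : ∑ i, c i * l (g i) = 0 := by simpa using hlx
  have hc0 : ∀ i, c i = 0 := fun i =>
    (mul_eq_zero.mp ((Finset.sum_eq_zero_iff_of_nonneg fun j _ =>
      mul_nonneg (hc j) (hl j).le).mp hsum i (Finset.mem_univ i))).resolve_right (hl i).ne'
  simp [hc0]

theorem coneGen_inter_eq_zero_of_separating {m : ℕ} {g : Fin n → V} {h : Fin m → V}
    (l : V →ₗ[ℚ] ℚ) (hg : ∀ i, 0 < l (g i)) (hh : ∀ j, l (h j) ≤ 0) :
    coneGen g ∩ coneGen h = {0} := by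
  refine Set.eq_singleton_iff_unique_mem.mpr ⟨⟨zero_mem_coneGen g, zero_mem_coneGen h⟩, ?_⟩
  rintro x ⟨hxg, hxh⟩
  have hpos : 0 ≤ l x := map_nonneg_of_mem_coneGen (fun i => (hg i).le) hxg
  have hneg : 0 ≤ (-l) x := map_nonneg_of_mem_coneGen (fun j => by simpa using hh j) hxh
  exact eq_zero_of_mem_coneGen_of_map_eq_zero hg hxg (by simp at hneg; linarith)

end coneGen

theorem eps_comp_genS : ⇑eps ∘ genS = ![![-1, 4, -5], ![5, 0, 14], ![1, 5, 0]] := by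
  ext i j
  simp only [Function.comp_apply, eps, Matrix.toLin'_apply]
  fin_cases i <;> fin_cases j <;>
    simp [epsMat, genS, Matrix.mulVec, dotProduct, Fin.sum_univ_three] <;> norm_num

theorem coneGen_genS_inter_eq_zero :
    coneGen genS ∩ coneGen ![![-1, 4, -5], ![5, 0, 14], ![1, 5, 0]] =
      ({0} : Set (Fin 3 → ℚ)) := by
  refine coneGen_inter_eq_zero_of_separating ((-4 : ℚ) • LinearMap.proj 1 - LinearMap.proj 2)
    ?_ ?_ <;>
  · intro i
    fin_cases i <;> norm_num [genS, Matrix.cons_val_two]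

/-- `σ ∩ ε(σ) = {0}`; equivalently,
`Cone(5u+v−5w, −5u−5v+14w, 4u−v) ∩ Cone(−u+4v−5w, 5u+14w, u+5v) = {0}`. -/
theorem sigma_inter_eps_sigma_eq_zero :
    coneSigma ∩ (⇑eps '' coneSigma) = ({0} : Set (Fin 3 → ℚ)) ∧
    coneGen genS ∩ coneGen ![![-1, 4, -5], ![5, 0, 14], ![1, 5, 0]] =
      ({0} : Set (Fin 3 → ℚ)) := by
  refine ⟨?_, coneGen_genS_inter_eq_zero⟩
  rw [coneSigma, eps.image_coneGen, eps_comp_genS]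
  exact coneGen_genS_inter_eq_zero
end

section
/- Set σ₁ = σ, σ₂ = ε(σ), σ₃ = ε²(σ), with σ and ε as above. There do not exist linear forms l₁, l₂, l₃ : ℚ³ → ℚ such that for all i ≠ j in {1,2,3} and every nonzero x ∈ σᵢ one has lᵢ(x) > lⱼ(x). -/
open Pointwise

/-- The three cones `σ₁ = σ`, `σ₂ = ε(σ)`, `σ₃ = ε²(σ)`. -/
def threeCones : Fin 3 → Set (Fin 3 → ℚ) :=
  ![coneSigma, ⇑eps '' coneSigma, ⇑eps '' (⇑eps '' coneSigma)]

/-!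
Since `ε³ = 1`, the cones `σ, εσ, ε²σ` form one orbit, and summing the forms along it,
`m = l₁ + l₂ ∘ ε + l₃ ∘ ε²`, turns the strict inequalities into `m(εx) < m(x)` and
`m(ε²x) < m(x)` for nonzero `x ∈ σ`. So `m` is positive on `(1 - ε)g₀`, `(1 - ε²)g₀` and
`(1 - ε)g₁` for the first two generators `g₀, g₁` of `σ`; but these vectors satisfy the positive
relation `5 (1 - ε)g₀ + 20 (1 - ε²)g₀ + 21 (1 - ε)g₁ = 0`.
-/

theorem exists_form_decreasing_on_orbit {K V : Type*} [CommRing K] [LinearOrder K]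
    [IsStrictOrderedRing K] [AddCommGroup V] [Module K V]
    (ε : V →ₗ[K] V) (hε : ∀ x, ε (ε (ε x)) = x) (σ : Set V) (l : Fin 3 → V →ₗ[K] K)
    (hl : ∀ i j : Fin 3, i ≠ j → ∀ x ∈ ![σ, ε '' σ, ε '' (ε '' σ)] i, x ≠ 0 → l j x < l i x) :
    ∃ m : V →ₗ[K] K, ∀ x ∈ σ, x ≠ 0 → m (ε x) < m x ∧ m (ε (ε x)) < m x := by
  refine ⟨l 0 + l 1 ∘ₗ ε + l 2 ∘ₗ ε ∘ₗ ε, fun x hx hx0 => ?_⟩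
  have hεx : ε x ≠ 0 := fun h => hx0 (by rw [← hε x, h, map_zero, map_zero])
  have hε2x : ε (ε x) ≠ 0 := fun h => hx0 (by rw [← hε x, h, map_zero])
  have h₀ : ∀ j, j ≠ 0 → l j x < l 0 x := fun j hj => hl 0 j hj.symm x hx hx0
  have h₁ : ∀ j, j ≠ 1 → l j (ε x) < l 1 (ε x) := fun j hj => hl 1 j hj.symm _ ⟨x, hx, rfl⟩ hεx
  have h₂ : ∀ j, j ≠ 2 → l j (ε (ε x)) < l 2 (ε (ε x)) := fun j hj =>
    hl 2 j hj.symm _ ⟨ε x, ⟨x, hx, rfl⟩, rfl⟩ hε2x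
  simp only [LinearMap.add_apply, LinearMap.comp_apply, hε]
  constructor
  · linarith [h₀ 2 (by decide), h₁ 0 (by decide), h₂ 1 (by decide)]
  · linarith [h₀ 1 (by decide), h₁ 2 (by decide), h₂ 0 (by decide)]

theorem mem_coneGen {V : Type*} [AddCommGroup V] [Module ℚ V] {n : ℕ} (g : Fin n → V)
    (i : Fin n) : g i ∈ coneGen g :=
  ⟨Pi.single i 1, fun j => by by_cases h : j = i <;> simp [h], by simp [Pi.single_apply]⟩

theorem eps_apply (x : Fin 3 → ℚ) : eps x = ![-x 1, x 0 - x 1, x 2] := by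
  ext i
  rw [eps, Matrix.toLin'_apply]
  fin_cases i <;> simp [epsMat, Matrix.mulVec, dotProduct, Fin.sum_univ_three, sub_eq_add_neg]

theorem eps_eps_eps (x : Fin 3 → ℚ) : eps (eps (eps x)) = x := by
  ext i
  fin_cases i <;> simp [eps_apply]
  ring

theorem eps_relation :
    (5 : ℚ) • (genS 0 - eps (genS 0)) + (20 : ℚ) • (genS 0 - eps (eps (genS 0)))
      + (21 : ℚ) • (genS 1 - eps (genS 1)) = 0 := by
  ext i
  fin_cases i <;> simp [eps_apply, genS] <;> norm_num

/-- There are no linear forms `l₁, l₂, l₃ : ℚ³ → ℚ` such that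
for all `i ≠ j` and every nonzero `x ∈ σᵢ` one has `lᵢ(x) > lⱼ(x)`. -/
theorem no_strict_linear_forms :
    ¬ ∃ l : Fin 3 → ((Fin 3 → ℚ) →ₗ[ℚ] ℚ),
        ∀ i j : Fin 3, i ≠ j → ∀ x ∈ threeCones i, x ≠ 0 → l j x < l i x := by
  rintro ⟨l, hl⟩
  obtain ⟨m, hm⟩ := exists_form_decreasing_on_orbit eps eps_eps_eps coneSigma l hl
  have hg₀ : genS 0 ≠ 0 := fun h => by simpa [genS] using congrFun h 0
  have hg₁ : genS 1 ≠ 0 := fun h => by simpa [genS] using congrFun h 0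
  obtain ⟨h₁, h₂⟩ := hm _ (mem_coneGen genS 0) hg₀
  obtain ⟨h₃, -⟩ := hm _ (mem_coneGen genS 1) hg₁
  have hrel := congrArg m eps_relation
  simp only [map_add, map_smul, map_sub, map_zero, smul_eq_mul] at hrel
  linarith
end

section
/- Let σ and σ' be strictly convex cones in a finite-dimensional ℚ-vector space V whose intersection σ ∩ σ' is a face of σ and a face of σ'. Then there exists a linear form l : V → ℚ with l ≥ 0 on σ, l ≤ 0 on σ', and σ ∩ l⁻¹(0) = σ' ∩ l⁻¹(0) = σ ∩ σ'. -/
/-! Write `σ = K`, `σ' = K'` as finitely generated pointed cones and let `γ = K - K'`.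
Farkas' lemma, proved by Fourier–Motzkin elimination, gives for every generator `v` of `γ` with
`-v ∉ γ` a form that is nonnegative on `γ` and positive at `v`; their sum `l` is nonnegative on `γ`
and vanishes at `x ∈ γ` only if `-x ∈ γ`. So if `x ∈ K` and `l x = 0`, then `x + y ∈ K'` for some
`y ∈ K`; as `K ∩ K'` is a face of `K`, this forces `x ∈ K ∩ K'`. The same argument applies to
`K'`. -/

open Pointwise

namespace PointedCone

variable {𝕜 V : Type*} [Field 𝕜] [LinearOrder 𝕜] [IsStrictOrderedRing 𝕜]
  [AddCommGroup V] [Module 𝕜 V]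

open Set

theorem apply_nonneg_of_mem_hull {s : Set V} {l : V →ₗ[𝕜] 𝕜} (hl : ∀ x ∈ s, 0 ≤ l x) {x : V}
    (hx : x ∈ hull 𝕜 s) : 0 ≤ l x :=
  (Submodule.span_le (p := (positive 𝕜 𝕜).comap l)).2 hl hx

theorem exists_nonneg_neg_of_notMem_hull_range {n : ℕ} (g : Fin n → V) {w : V}
    (hw : w ∉ hull 𝕜 (range g)) : ∃ l : V →ₗ[𝕜] 𝕜, (∀ i, 0 ≤ l (g i)) ∧ l w < 0 := by
  induction n generalizing w with
  | zero =>
    have hw0 : w ≠ 0 := by rintro rfl; exact hw (zero_mem _)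
    obtain ⟨φ, hφ⟩ := Module.Projective.exists_dual_ne_zero 𝕜 hw0
    exact ⟨-(φ w)⁻¹ • φ, finZeroElim, by simp [hφ]⟩
  | succ n ih =>
    rw [← Fin.cons_self_tail g, Fin.range_cons] at hw
    obtain ⟨l, hl, hlw⟩ := ih (Fin.tail g) fun h => hw (Submodule.span_mono (subset_insert _ _) h)
    by_cases ha : 0 ≤ l (g 0)
    · exact ⟨l, Fin.cases ha hl, hlw⟩
    push Not at ha
    -- the projection onto `ker l` along `g 0`
    let π : V →ₗ[𝕜] V := LinearMap.id - (l (g 0))⁻¹ • l.smulRight (g 0)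
    have hπ : ∀ v, π v = v - (l (g 0))⁻¹ • l v • g 0 := fun v => rfl
    have hπw : π w ∉ hull 𝕜 (range (π ∘ Fin.tail g)) := by
      intro h
      rw [range_comp] at h
      obtain ⟨y, hy, hyw⟩ := (Submodule.map_span (π.restrictScalars _) _).ge h
      have hly : 0 ≤ l y := apply_nonneg_of_mem_hull (forall_mem_range.2 hl) hy
      refine hw (Submodule.mem_span_insert.2 ⟨⟨(l w - l y) / l (g 0), ?_⟩, y, hy, ?_⟩)
      · exact div_nonneg_of_nonpos (by linarith) ha.le
      · simp only [LinearMap.coe_restrictScalars, hπ] at hyw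
        rw [Nonneg.mk_smul]
        linear_combination (norm := module) -hyw
    obtain ⟨l', hl', hl'w⟩ := ih _ hπw
    refine ⟨l' ∘ₗ π, Fin.cases ?_ hl', hl'w⟩
    simp [hπ, ha.ne]

theorem exists_nonneg_neg_of_notMem_of_fg {C : PointedCone 𝕜 V} (hC : C.FG) {w : V} (hw : w ∉ C) :
    ∃ l : V →ₗ[𝕜] 𝕜, (∀ x ∈ C, 0 ≤ l x) ∧ l w < 0 := by
  obtain ⟨n, g, rfl⟩ := Submodule.fg_iff_exists_fin_generating_family.1 hC
  obtain ⟨l, hl, hlw⟩ := exists_nonneg_neg_of_notMem_hull_range g hw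
  exact ⟨l, fun x hx => apply_nonneg_of_mem_hull (forall_mem_range.2 hl) hx, hlw⟩

theorem neg_mem_hull_of_apply_eq_zero {s : Set V} {l : V →ₗ[𝕜] 𝕜}
    (hl : ∀ x ∈ hull 𝕜 s, 0 ≤ l x) (hpos : ∀ v ∈ s, -v ∉ hull 𝕜 s → 0 < l v) {x : V}
    (hx : x ∈ hull 𝕜 s) (hlx : l x = 0) : -x ∈ hull 𝕜 s := by
  induction hx using Submodule.span_induction with
  | mem v hv => exact not_not.1 fun h => (hpos v hv h).ne' hlx
  | zero => simp
  | add x y hx hy ihx ihy =>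
    have hlx₀ := hl x hx
    have hly₀ := hl y hy
    rw [map_add] at hlx
    rw [neg_add]
    exact add_mem (ihx (by linarith)) (ihy (by linarith))
  | smul c x hx ih =>
    rcases eq_or_ne c 0 with rfl | hc
    · simp
    simp only [LinearMap.map_smul_of_tower, smul_eq_zero] at hlx
    rw [← smul_neg]
    exact Submodule.smul_mem _ c (ih (hlx.resolve_left hc))

theorem exists_nonneg_neg_mem_of_apply_eq_zero_of_fg {C : PointedCone 𝕜 V} (hC : C.FG) :
    ∃ l : V →ₗ[𝕜] 𝕜, (∀ x ∈ C, 0 ≤ l x) ∧ ∀ x ∈ C, l x = 0 → -x ∈ C := by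
  have hgen : ∀ v : V, ∃ l : V →ₗ[𝕜] 𝕜, (∀ x ∈ C, 0 ≤ l x) ∧ (-v ∉ C → 0 < l v) := by
    intro v
    by_cases hv : -v ∈ C
    · exact ⟨0, fun _ _ => le_rfl, fun h => absurd hv h⟩
    obtain ⟨l, hl, hlv⟩ := exists_nonneg_neg_of_notMem_of_fg hC hv
    exact ⟨l, hl, fun _ => by simpa using hlv⟩
  choose L hL hLpos using hgen
  obtain ⟨s, rfl⟩ := hC
  have hl : ∀ x ∈ hull 𝕜 (s : Set V), 0 ≤ (∑ v ∈ s, L v) x := fun x hx => by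
    rw [LinearMap.sum_apply]
    exact Finset.sum_nonneg fun v _ => hL v x hx
  refine ⟨∑ v ∈ s, L v, hl, fun x hx => neg_mem_hull_of_apply_eq_zero hl (fun v hv hv' => ?_) hx⟩
  rw [LinearMap.sum_apply]
  exact (hLpos v hv').trans_le
    (Finset.single_le_sum (fun u _ => hL u v (Submodule.subset_span hv)) (Finset.mem_coe.1 hv))

end PointedCone

section

open Set

variable {V : Type*} [AddCommGroup V] [Module ℚ V]

theorem coneGen_eq_hull {n : ℕ} (g : Fin n → V) : coneGen g = PointedCone.hull ℚ (range g) := by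
  ext x
  simp only [coneGen, SetLike.mem_coe, Submodule.mem_span_range_iff_exists_fun]
  constructor
  · rintro ⟨c, hc, rfl⟩
    exact ⟨fun i => ⟨c i, hc i⟩, rfl⟩
  · rintro ⟨c, rfl⟩
    exact ⟨fun i => c i, fun i => (c i).2, rfl⟩

theorem IsCone.exists_fg {C : Set V} (hC : IsCone C) : ∃ K : PointedCone ℚ V, K.FG ∧ C = K := by
  obtain ⟨n, g, rfl⟩ := hC
  exact ⟨_, Submodule.fg_span (finite_range g), coneGen_eq_hull g⟩

theorem IsFaceOf.mem_of_add_mem {F C : Set V} (hF : IsFaceOf F C) {x y : V} (hx : x ∈ C)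
    (hy : y ∈ C) (hxy : x + y ∈ F) : x ∈ F := by
  obtain ⟨l, hl, rfl⟩ := hF
  have hlxy : l x + l y = 0 := by simpa using hxy.2
  have hlx₀ := hl x hx
  have hly₀ := hl y hy
  exact ⟨hx, show l x = 0 by linarith⟩

theorem inter_setOf_eq_inter_of_isFaceOf {K K' : PointedCone ℚ V} {l : V →ₗ[ℚ] ℚ}
    (hface : IsFaceOf ((K : Set V) ∩ K') K) (hzero : ∀ x ∈ (K : Set V) ∩ K', l x = 0)
    (hker : ∀ x ∈ K, l x = 0 → ∃ y ∈ K, x + y ∈ K') :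
    (K : Set V) ∩ {x | l x = 0} = (K : Set V) ∩ K' := by
  refine Subset.antisymm (fun x ⟨hx, hlx⟩ => ?_) (fun x hx => ⟨hx.1, hzero x hx⟩)
  obtain ⟨y, hy, hxy⟩ := hker x hx hlx
  exact hface.mem_of_add_mem hx hy ⟨K.add_mem hx hy, hxy⟩

end

theorem exists_separating_linear_form_of_common_face_general
    {V : Type*} [AddCommGroup V] [Module ℚ V]
    (σ σ' : Set V) (hσ : IsCone σ) (hσ' : IsCone σ')
    (hface : IsFaceOf (σ ∩ σ') σ) (hface' : IsFaceOf (σ ∩ σ') σ') :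
    ∃ l : V →ₗ[ℚ] ℚ, (∀ x ∈ σ, 0 ≤ l x) ∧ (∀ x ∈ σ', l x ≤ 0) ∧
      σ ∩ {x | l x = 0} = σ ∩ σ' ∧ σ' ∩ {x | l x = 0} = σ ∩ σ' := by
  obtain ⟨K, hK, rfl⟩ := hσ.exists_fg
  obtain ⟨K', hK', rfl⟩ := hσ'.exists_fg
  -- the cone `K - K'`
  obtain ⟨l, hl, hlin⟩ :=
    PointedCone.exists_nonneg_neg_mem_of_apply_eq_zero_of_fg (hK.sup (hK'.map (-LinearMap.id)))
  have hlK : ∀ x ∈ K, 0 ≤ l x := fun x hx => hl x (Submodule.mem_sup_left hx)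
  have hlK' : ∀ y ∈ K', l y ≤ 0 := fun y hy => by
    simpa using hl (-y) (Submodule.mem_sup_right ⟨y, hy, rfl⟩)
  have hzero : ∀ x ∈ (K : Set V) ∩ K', l x = 0 := fun x hx =>
    le_antisymm (hlK' x hx.2) (hlK x hx.1)
  refine ⟨l, hlK, hlK', inter_setOf_eq_inter_of_isFaceOf hface hzero fun x hx hlx => ?_, ?_⟩
  · obtain ⟨y, hy, _, ⟨z, hz, rfl⟩, hyz⟩ :=
      Submodule.mem_sup.1 (hlin x (Submodule.mem_sup_left hx) hlx)
    simp only [LinearMap.neg_apply, LinearMap.id_coe, id_eq] at hyz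
    refine ⟨y, hy, ?_⟩
    rwa [show x + y = z by linear_combination (norm := module) hyz]
  · rw [Set.inter_comm (K : Set V)] at hface' hzero ⊢
    refine inter_setOf_eq_inter_of_isFaceOf hface' hzero fun y hy hly => ?_
    obtain ⟨x, hx, _, ⟨z, hz, rfl⟩, hxz⟩ :=
      Submodule.mem_sup.1 (hlin (-y) (Submodule.mem_sup_right ⟨y, hy, rfl⟩) (by simpa using hly))
    simp only [LinearMap.neg_apply, LinearMap.id_coe, id_eq, neg_neg] at hxz
    refine ⟨z, hz, ?_⟩
    rwa [show y + z = x by linear_combination (norm := module) -hxz]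

/-- If `σ` and `σ'` are strictly convex cones in a
finite-dimensional `ℚ`-vector space whose intersection is a face of each, then
there is a linear form `l` with `l ≥ 0` on `σ`, `l ≤ 0` on `σ'` and
`σ ∩ l⁻¹(0) = σ' ∩ l⁻¹(0) = σ ∩ σ'`. -/
theorem exists_separating_linear_form_of_common_face
    {V : Type*} [AddCommGroup V] [Module ℚ V] [FiniteDimensional ℚ V]
    (σ σ' : Set V) (hσ : IsCone σ) (hσ' : IsCone σ')
    (hsc : σ ∩ (-σ) = ({0} : Set V)) (hsc' : σ' ∩ (-σ') = ({0} : Set V))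
    (hface : IsFaceOf (σ ∩ σ') σ) (hface' : IsFaceOf (σ ∩ σ') σ') :
    ∃ l : V →ₗ[ℚ] ℚ, (∀ x ∈ σ, 0 ≤ l x) ∧ (∀ x ∈ σ', l x ≤ 0) ∧
      σ ∩ {x | l x = 0} = σ ∩ σ' ∧ σ' ∩ {x | l x = 0} = σ ∩ σ' :=
  exists_separating_linear_form_of_common_face_general σ σ' hσ hσ' hface hface'
end

section
/- Let C₁ and C₂ be strictly convex cones in a finite-dimensional ℚ-vector space V with C₁ ∩ C₂ = {0}. Then the set C₁ − C₂ = {x − y : x ∈ C₁, y ∈ C₂} is again a strictly convex cone in V. -/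
open Pointwise

lemma coneGen_add_mem {V : Type*} [AddCommGroup V] [Module ℚ V] {n : ℕ} {g : Fin n → V}
    {x y : V} (hx : x ∈ coneGen g) (hy : y ∈ coneGen g) : x + y ∈ coneGen g := by
  obtain ⟨c, hc, rfl⟩ := hx
  obtain ⟨d, hd, rfl⟩ := hy
  exact ⟨c + d, fun i => add_nonneg (hc i) (hd i), by
    simp [add_smul, Finset.sum_add_distrib]⟩

/-- If `C₁` and `C₂` are strictly convex cones in a
finite-dimensional `ℚ`-vector space with `C₁ ∩ C₂ = {0}`, then the pointwise
difference `C₁ − C₂ = {x − y : x ∈ C₁, y ∈ C₂}` is again a strictly convex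
cone. -/
theorem sub_of_strictly_convex_cones_is_strictly_convex
    {V : Type*} [AddCommGroup V] [Module ℚ V] [FiniteDimensional ℚ V]
    (C₁ C₂ : Set V) (hC₁ : IsCone C₁) (hC₂ : IsCone C₂)
    (hsc₁ : C₁ ∩ (-C₁) = ({0} : Set V)) (hsc₂ : C₂ ∩ (-C₂) = ({0} : Set V))
    (hinter : C₁ ∩ C₂ = ({0} : Set V)) :
    IsCone (C₁ - C₂) ∧ (C₁ - C₂) ∩ (-(C₁ - C₂)) = ({0} : Set V) := by
  obtain ⟨n, g, rfl⟩ := hC₁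
  obtain ⟨m, h, rfl⟩ := hC₂
  have h0 : (0 : V) ∈ coneGen g ∩ coneGen h := by rw [hinter]; rfl
  constructor
  · refine ⟨n + m, Fin.append g (fun j => -(h j)), ?_⟩
    ext x
    constructor
    · rintro ⟨a, ha, b, hb, rfl⟩
      obtain ⟨c, hc, rfl⟩ := ha
      obtain ⟨d, hd, rfl⟩ := hb
      refine ⟨Fin.append c d, ?_, ?_⟩
      · intro i
        refine Fin.addCases (fun i => ?_) (fun i => ?_) i
        · simpa using hc i
        · simpa using hd i
      · rw [Fin.sum_univ_add]
        simp [sub_eq_add_neg, ← Finset.sum_neg_distrib]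
    · rintro ⟨e, he, rfl⟩
      rw [Fin.sum_univ_add]
      simp only [Fin.append_left, Fin.append_right]
      refine ⟨∑ i, e (Fin.castAdd m i) • g i, ⟨_, fun i => he _, rfl⟩,
        ∑ j, e (Fin.natAdd n j) • h j, ⟨_, fun j => he _, rfl⟩, ?_⟩
      simp [sub_eq_add_neg, ← Finset.sum_neg_distrib]
  · ext z
    simp only [Set.mem_inter_iff, Set.mem_neg, Set.mem_singleton_iff]
    constructor
    · rintro ⟨⟨x₁, hx₁, y₁, hy₁, hz₁⟩, x₂, hx₂, y₂, hy₂, hz₂⟩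
      have e1 : x₁ - y₁ = z := hz₁
      have e2 : x₂ - y₂ = -z := hz₂
      have hsum : x₁ + x₂ = y₁ + y₂ := by
        have e3 : (x₁ - y₁) + (x₂ - y₂) = 0 := by rw [e1, e2]; simp
        have e4 : x₁ + x₂ - (y₁ + y₂) = 0 := by rw [← e3]; abel
        exact sub_eq_zero.mp e4
      have hmem : x₁ + x₂ ∈ coneGen g ∩ coneGen h := by
        exact ⟨coneGen_add_mem hx₁ hx₂, hsum ▸ coneGen_add_mem hy₁ hy₂⟩
      rw [hinter] at hmem
      have hxx : x₁ + x₂ = 0 := hmem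
      have hyy : y₁ + y₂ = 0 := by rw [← hsum]; exact hxx
      have hx₁0 : x₁ = 0 := by
        have : x₁ ∈ coneGen g ∩ (-coneGen g) :=
          ⟨hx₁, by simp only [Set.mem_neg]
                   rw [neg_eq_of_add_eq_zero_right hxx]; exact hx₂⟩
        rw [hsc₁] at this; exact this
      have hy₁0 : y₁ = 0 := by
        have : y₁ ∈ coneGen h ∩ (-coneGen h) :=
          ⟨hy₁, by simp only [Set.mem_neg]
                   rw [neg_eq_of_add_eq_zero_right hyy]; exact hy₂⟩
        rw [hsc₂] at this; exact this
      rw [← e1, hx₁0, hy₁0, sub_zero]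
    · rintro rfl
      exact ⟨⟨0, h0.1, 0, h0.2, by simp⟩, 0, h0.1, 0, h0.2, by simp⟩
end

section
/- Let C₁ and C₂ be strictly convex cones in a finite-dimensional ℚ-vector space V with C₁ ∩ C₂ = {0}. Then there exists a linear form l : V → ℚ such that l(x) > 0 for every nonzero x ∈ C₁ and l(y) < 0 for every nonzero y ∈ C₂. -/
open Pointwise

/-- Gordan-type lemma: if no nontrivial nonnegative combination of the `g i`
vanishes, there is a linear form positive on every `g i`. -/
lemma gordan_aux {V : Type*} [AddCommGroup V] [Module ℚ V] [FiniteDimensional ℚ V] :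
    ∀ (n : ℕ) (g : Fin n → V),
      (∀ c : Fin n → ℚ, (∀ i, 0 ≤ c i) → ∑ i, c i • g i = 0 → ∀ i, c i = 0) →
      ∃ l : V →ₗ[ℚ] ℚ, ∀ i, 0 < l (g i) := by
  intro n
  induction n with
  | zero => exact fun g _ => ⟨0, fun i => i.elim0⟩
  | succ n ih =>
    intro g hg
    set a := g (Fin.last n) with ha_def
    have h1 : ∀ c : Fin n → ℚ, (∀ i, 0 ≤ c i) →
        ∑ i, c i • g i.castSucc = 0 → ∀ i, c i = 0 := by
      intro c hc hsum i
      have := hg (Fin.snoc c 0)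
        (fun j => by
          refine Fin.lastCases ?_ ?_ j
          · simp
          · intro k; simpa using hc k)
        (by
          rw [Fin.sum_univ_castSucc]
          simp [Fin.snoc_castSucc, Fin.snoc_last, hsum])
        i.castSucc
      simpa using this
    obtain ⟨l, hl⟩ := ih (fun i => g i.castSucc) h1
    by_cases hla0 : 0 < l a
    · exact ⟨l, fun i => Fin.lastCases hla0 hl i⟩
    push_neg at hla0
    rcases Nat.eq_zero_or_pos n with rfl | hn
    · -- single nonzero vector
      have hane : a ≠ 0 := by
        intro h0
        have := hg (fun _ => 1) (fun _ => zero_le_one)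
          (by rw [Fin.sum_univ_one, one_smul]; exact h0) (Fin.last 0)
        norm_num at this
      have hexφ : ¬ ∀ φ : Module.Dual ℚ V, φ a = 0 := by
        rw [Module.forall_dual_apply_eq_zero_iff]; exact hane
      push_neg at hexφ
      obtain ⟨φ, hφ⟩ := hexφ
      refine ⟨(φ a)⁻¹ • φ, fun i => ?_⟩
      have hi : i = Fin.last 0 := by omega
      rw [hi]
      have hval : ((φ a)⁻¹ • φ) a = (φ a)⁻¹ * φ a := rfl
      rw [← ha_def, hval, inv_mul_cancel₀ hφ]
      norm_num
    · -- n ≥ 1; tilt l using the auxiliary family h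
      set h : Fin n → V := fun i => l (g i.castSucc) • a - l a • g i.castSucc with hh
      have h2 : ∀ c : Fin n → ℚ, (∀ i, 0 ≤ c i) →
          ∑ i, c i • h i = 0 → ∀ i, c i = 0 := by
        intro c hc hsum i
        have e1 : ∑ i, c i • h i
            = (∑ i, c i * l (g i.castSucc)) • a - l a • ∑ i, c i • g i.castSucc := by
          rw [Finset.sum_smul, Finset.smul_sum, ← Finset.sum_sub_distrib]
          refine Finset.sum_congr rfl fun k _ => ?_
          rw [hh]
          simp only [smul_sub, smul_smul]
          rw [mul_comm (l a) (c k)]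
        have key := hg (Fin.snoc (fun i => (-(l a)) * c i) (∑ i, c i * l (g i.castSucc)))
          (fun j => by
            refine Fin.lastCases ?_ ?_ j
            · simp only [Fin.snoc_last]
              exact Finset.sum_nonneg fun k _ => mul_nonneg (hc k) (hl k).le
            · intro k
              simp only [Fin.snoc_castSucc]
              exact mul_nonneg (by linarith) (hc k))
          (by
            rw [Fin.sum_univ_castSucc]
            simp only [Fin.snoc_castSucc, Fin.snoc_last, ← ha_def]
            have e2 : ∑ i : Fin n, ((-(l a)) * c i) • g i.castSucc
                = -(l a • ∑ i : Fin n, c i • g i.castSucc) := by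
              rw [Finset.smul_sum, ← Finset.sum_neg_distrib]
              refine Finset.sum_congr rfl fun k _ => ?_
              rw [mul_smul, neg_smul, smul_comm]
            rw [e2, neg_add_eq_sub, ← e1]
            exact hsum)
          (Fin.last n)
        rw [Fin.snoc_last] at key
        have hterm := (Finset.sum_eq_zero_iff_of_nonneg
          (fun k _ => mul_nonneg (hc k) (hl k).le)).mp key i (Finset.mem_univ i)
        rcases mul_eq_zero.mp hterm with h0 | h0
        · exact h0
        · exact absurd h0 (hl i).ne'
      obtain ⟨m, hm⟩ := ih h h2
      have hm' : ∀ i : Fin n, l a * m (g i.castSucc) < l (g i.castSucc) * m a := by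
        intro i
        have := hm i
        rw [hh] at this
        simp only [map_sub, map_smul, smul_eq_mul] at this
        linarith
      haveI : Nonempty (Fin n) := ⟨⟨0, hn⟩⟩
      set T := Finset.univ.sup' Finset.univ_nonempty
        (fun i : Fin n => -(m (g i.castSucc)) / l (g i.castSucc)) with hT
      obtain ⟨t, ht1, ht2⟩ : ∃ t : ℚ,
          (∀ i : Fin n, -(m (g i.castSucc)) < t * l (g i.castSucc)) ∧
          0 < t * l a + m a := by
        rcases lt_or_eq_of_le hla0 with hlt | heq
        · -- l a < 0
          have hα : 0 < -(l a) := by linarith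
          have hTlt : T < m a / (-(l a)) := by
            rw [hT, Finset.sup'_lt_iff]
            intro i _
            rw [div_lt_div_iff₀ (hl i) hα]
            nlinarith [hm' i]
          refine ⟨(T + m a / (-(l a))) / 2, fun i => ?_, ?_⟩
          · have hle := Finset.le_sup'
              (fun i : Fin n => -(m (g i.castSucc)) / l (g i.castSucc)) (Finset.mem_univ i)
            rw [← hT] at hle
            have : -(m (g i.castSucc)) / l (g i.castSucc) < (T + m a / (-(l a))) / 2 := by
              linarith
            rw [div_lt_iff₀ (hl i)] at this
            linarith [this]
          · have hmid : (T + m a / (-(l a))) / 2 < m a / (-(l a)) := by linarith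
            rw [lt_div_iff₀ hα, mul_neg] at hmid
            linarith
        · -- l a = 0
          have ma_pos : 0 < m a := by
            have h5 := hm' ⟨0, hn⟩
            rw [heq, zero_mul] at h5
            nlinarith [hl ⟨0, hn⟩]
          refine ⟨T + 1, fun i => ?_, ?_⟩
          · have hle := Finset.le_sup'
              (fun i : Fin n => -(m (g i.castSucc)) / l (g i.castSucc)) (Finset.mem_univ i)
            rw [← hT] at hle
            have : -(m (g i.castSucc)) / l (g i.castSucc) < T + 1 := by linarith
            rw [div_lt_iff₀ (hl i)] at this
            linarith
          · rw [heq, mul_zero, zero_add]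
            exact ma_pos
      refine ⟨t • l + m, fun i => ?_⟩
      refine Fin.lastCases ?_ ?_ i
      · simpa [LinearMap.add_apply, LinearMap.smul_apply, smul_eq_mul, ← ha_def] using ht2
      · intro k
        have := ht1 k
        simp only [LinearMap.add_apply, LinearMap.smul_apply, smul_eq_mul]
        linarith

/-- Filtered version: positivity only demanded on the nonzero generators. -/
lemma exists_pos_forms {V : Type*} [AddCommGroup V] [Module ℚ V] [FiniteDimensional ℚ V]
    {n : ℕ} (g : Fin n → V)
    (hg : ∀ c : Fin n → ℚ, (∀ i, 0 ≤ c i) → ∑ i, c i • g i = 0 → ∀ i, g i ≠ 0 → c i = 0) :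
    ∃ l : V →ₗ[ℚ] ℚ, ∀ i, g i ≠ 0 → 0 < l (g i) := by
  classical
  set ι := {i : Fin n // g i ≠ 0} with hι
  set e : ι ≃ Fin (Fintype.card ι) := Fintype.equivFin ι with he
  set g' : Fin (Fintype.card ι) → V := fun j => g (e.symm j).val with hg'def
  have hg'hyp : ∀ c : Fin (Fintype.card ι) → ℚ, (∀ j, 0 ≤ c j) →
      ∑ j, c j • g' j = 0 → ∀ j, c j = 0 := by
    intro c hc hsum j
    set ch : Fin n → ℚ := fun i => if h : g i ≠ 0 then c (e ⟨i, h⟩) else 0 with hch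
    have hchnn : ∀ i, 0 ≤ ch i := by
      intro i
      rw [hch]
      dsimp only
      by_cases h : g i ≠ 0
      · rw [dif_pos h]; exact hc _
      · rw [dif_neg h]
    have hsum2 : ∑ i, ch i • g i = ∑ j, c j • g' j := by
      have e0 : ∑ i, ch i • g i = ∑ i ∈ Finset.univ.filter (fun i => g i ≠ 0), ch i • g i := by
        rw [Finset.sum_filter_of_ne]
        intro i _ hne h0
        exact hne (by rw [h0, smul_zero])
      have e1 : ∑ i ∈ Finset.univ.filter (fun i => g i ≠ 0), ch i • g i
          = ∑ i : ι, ch i.val • g i.val := by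
        refine Finset.sum_subtype _ (fun i => ?_) _
        simp [Finset.mem_filter]
      have e2 : ∀ i : ι, ch i.val • g i.val = c (e i) • g' (e i) := by
        rintro ⟨iv, hiv⟩
        rw [hch]
        dsimp only
        rw [dif_pos hiv, hg'def]
        simp only [Equiv.symm_apply_apply]
      rw [e0, e1]
      rw [Finset.sum_congr rfl (fun i _ => e2 i)]
      exact Equiv.sum_comp e (fun j => c j • g' j)
    have hall := hg ch hchnn (by rw [hsum2]; exact hsum)
    have := hall (e.symm j).val (e.symm j).prop
    rw [hch] at this
    dsimp only at this
    rw [dif_pos (e.symm j).prop] at this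
    simpa using this
  obtain ⟨l, hl⟩ := gordan_aux (Fintype.card ι) g' hg'hyp
  refine ⟨l, fun i hi => ?_⟩
  have := hl (e ⟨i, hi⟩)
  have hgg : g' (e ⟨i, hi⟩) = g i := by
    rw [hg'def]; simp only [Equiv.symm_apply_apply]
  rwa [hgg] at this

/-- In a strictly convex cone, a vanishing nonnegative combination has all
terms zero. -/
lemma coef_smul_eq_zero {V : Type*} [AddCommGroup V] [Module ℚ V]
    {n : ℕ} (g : Fin n → V)
    (hsc : coneGen g ∩ (-(coneGen g)) = ({0} : Set V))
    (c : Fin n → ℚ) (hc : ∀ i, 0 ≤ c i) (h0 : ∑ i, c i • g i = 0) (i : Fin n) :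
    c i • g i = 0 := by
  classical
  have h₁ : c i • g i ∈ coneGen g := by
    refine ⟨fun j => if j = i then c i else 0, fun j => ?_, ?_⟩
    · dsimp only
      by_cases h : j = i
      · rw [if_pos h]; exact hc i
      · rw [if_neg h]
    · simp [ite_smul, Finset.sum_ite_eq']
  have h₂ : c i • g i ∈ -(coneGen g) := by
    rw [Set.mem_neg]
    refine ⟨fun j => if j = i then 0 else c j, fun j => ?_, ?_⟩
    · dsimp only
      by_cases h : j = i
      · rw [if_pos h]
      · rw [if_neg h]; exact hc j
    · have e3 : ∑ j, (if j = i then (0:ℚ) else c j) • g j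
          = ∑ j ∈ Finset.univ.erase i, c j • g j := by
        rw [← Finset.add_sum_erase _ _ (Finset.mem_univ i)]
        rw [if_pos rfl, zero_smul, zero_add]
        refine Finset.sum_congr rfl fun j hj => ?_
        rw [if_neg (Finset.ne_of_mem_erase hj)]
      rw [e3, Finset.sum_erase_eq_sub (Finset.mem_univ i), h0, zero_sub]
  have hmem : c i • g i ∈ coneGen g ∩ (-(coneGen g)) := ⟨h₁, h₂⟩
  rw [hsc] at hmem
  exact hmem

/-- A form positive on the nonzero generators is positive on the nonzero
elements of the cone. -/
lemma pos_on_cone {V : Type*} [AddCommGroup V] [Module ℚ V]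
    {n : ℕ} (g : Fin n → V) (l : V →ₗ[ℚ] ℚ)
    (hl : ∀ i, g i ≠ 0 → 0 < l (g i)) :
    ∀ x ∈ coneGen g, x ≠ 0 → 0 < l x := by
  classical
  rintro x ⟨c, hc, rfl⟩ hx
  have hlx : l (∑ i, c i • g i) = ∑ i, c i * l (g i) := by
    rw [map_sum]
    exact Finset.sum_congr rfl fun i _ => by rw [map_smul, smul_eq_mul]
  have hterm : ∀ i ∈ Finset.univ, 0 ≤ c i * l (g i) := by
    intro i _
    by_cases h : g i = 0
    · rw [h, map_zero, mul_zero]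
    · exact mul_nonneg (hc i) (hl i h).le
  have hge : 0 ≤ ∑ i, c i * l (g i) := Finset.sum_nonneg hterm
  rcases hge.lt_or_eq with hpos | hzero
  · rw [hlx]; exact hpos
  · exfalso
    apply hx
    have hz := (Finset.sum_eq_zero_iff_of_nonneg hterm).mp hzero.symm
    refine Finset.sum_eq_zero fun i _ => ?_
    by_cases h : g i = 0
    · rw [h, smul_zero]
    · have hci : c i = 0 := by
        rcases mul_eq_zero.mp (hz i (Finset.mem_univ i)) with h' | h'
        · exact h'
        · exact absurd h' (hl i h).ne'
      rw [hci, zero_smul]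


/-- If `C₁` and `C₂` are strictly convex cones in a
finite-dimensional `ℚ`-vector space with `C₁ ∩ C₂ = {0}`, then there is a
linear form which is strictly positive on `C₁ \ {0}` and strictly negative on
`C₂ \ {0}`. -/
theorem exists_separating_linear_form_of_strictly_convex_cones
    {V : Type*} [AddCommGroup V] [Module ℚ V] [FiniteDimensional ℚ V]
    (C₁ C₂ : Set V) (hC₁ : IsCone C₁) (hC₂ : IsCone C₂)
    (hsc₁ : C₁ ∩ (-C₁) = ({0} : Set V)) (hsc₂ : C₂ ∩ (-C₂) = ({0} : Set V))
    (hinter : C₁ ∩ C₂ = ({0} : Set V)) :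
    ∃ l : V →ₗ[ℚ] ℚ, (∀ x ∈ C₁, x ≠ 0 → 0 < l x) ∧ (∀ y ∈ C₂, y ≠ 0 → l y < 0) := by
  classical
  classical
  obtain ⟨n₁, g₁, rfl⟩ := hC₁
  obtain ⟨n₂, g₂, rfl⟩ := hC₂
  set g : Fin (n₁ + n₂) → V := Fin.append g₁ (fun j => -(g₂ j)) with hgdef
  have hgl : ∀ i : Fin n₁, g (Fin.castAdd n₂ i) = g₁ i := by
    intro i; rw [hgdef]; exact Fin.append_left _ _ i
  have hgr : ∀ j : Fin n₂, g (Fin.natAdd n₁ j) = -(g₂ j) := by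
    intro j; rw [hgdef]; exact Fin.append_right _ _ j
  have hsplit : ∀ c : Fin (n₁ + n₂) → ℚ, ∑ i, c i • g i =
      (∑ i : Fin n₁, c (Fin.castAdd n₂ i) • g₁ i)
        - ∑ j : Fin n₂, c (Fin.natAdd n₁ j) • g₂ j := by
    intro c
    rw [Fin.sum_univ_add, sub_eq_add_neg, ← Finset.sum_neg_distrib]
    refine congrArg₂ (· + ·) (Finset.sum_congr rfl fun i _ => ?_)
      (Finset.sum_congr rfl fun j _ => ?_)
    · rw [hgl]
    · rw [hgr, smul_neg]
  have key : ∀ c : Fin (n₁ + n₂) → ℚ, (∀ i, 0 ≤ c i) →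
      ∑ i, c i • g i = 0 → ∀ i, g i ≠ 0 → c i = 0 := by
    intro c hc hsum i
    rw [hsplit] at hsum
    have hxy : (∑ i : Fin n₁, c (Fin.castAdd n₂ i) • g₁ i)
        = ∑ j : Fin n₂, c (Fin.natAdd n₁ j) • g₂ j := sub_eq_zero.mp hsum
    have hx : (∑ i : Fin n₁, c (Fin.castAdd n₂ i) • g₁ i) ∈ coneGen g₁ ∩ coneGen g₂ := by
      constructor
      · exact ⟨_, fun i => hc _, rfl⟩
      · rw [hxy]; exact ⟨_, fun j => hc _, rfl⟩
    rw [hinter] at hx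
    have hx0 : (∑ i : Fin n₁, c (Fin.castAdd n₂ i) • g₁ i) = 0 := hx
    have hy0 : (∑ j : Fin n₂, c (Fin.natAdd n₁ j) • g₂ j) = 0 := by rw [← hxy]; exact hx0
    refine Fin.addCases (motive := fun i => g i ≠ 0 → c i = 0) ?_ ?_ i
    · intro i' hi'
      have h0 := coef_smul_eq_zero g₁ hsc₁ (fun i => c (Fin.castAdd n₂ i))
        (fun _ => hc _) hx0 i'
      have hg1 : g₁ i' ≠ 0 := by rw [← hgl i']; exact hi'
      rcases smul_eq_zero.mp h0 with h' | h'
      · exact h'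
      · exact absurd h' hg1
    · intro j hj
      have h0 := coef_smul_eq_zero g₂ hsc₂ (fun j => c (Fin.natAdd n₁ j))
        (fun _ => hc _) hy0 j
      have hg2 : g₂ j ≠ 0 := by
        intro h'
        apply hj
        rw [hgr, h', neg_zero]
      rcases smul_eq_zero.mp h0 with h' | h'
      · exact h'
      · exact absurd h' hg2
  obtain ⟨l, hlpos⟩ := exists_pos_forms g key
  refine ⟨l, ?_, ?_⟩
  · intro x hx hx0
    refine pos_on_cone g₁ l (fun i hi => ?_) x hx hx0
    have := hlpos (Fin.castAdd n₂ i) (by rw [hgl]; exact hi)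
    rwa [hgl] at this
  · intro y hy hy0
    have hneg : -y ∈ coneGen (fun j => -(g₂ j)) := by
      obtain ⟨d, hd, rfl⟩ := hy
      refine ⟨d, hd, ?_⟩
      rw [← Finset.sum_neg_distrib]
      exact Finset.sum_congr rfl fun j _ => by rw [smul_neg]
    have hl2 : ∀ j : Fin n₂, (fun j => -(g₂ j)) j ≠ 0 → 0 < l ((fun j => -(g₂ j)) j) := by
      intro j hj
      have := hlpos (Fin.natAdd n₁ j) (by rw [hgr]; exact hj)
      rw [hgr] at this
      exact this
    have hpos := pos_on_cone (fun j => -(g₂ j)) l hl2 (-y) hneg (neg_ne_zero.mpr hy0)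
    rw [map_neg] at hpos
    linarith
end
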